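/- arXiv:1303.0761 — 4 statements merged into one kernel-verified Lean document; each statement's English description precedes it below -/
import Mathlib

section
/- Finite-volume Wells inequality. Let V be a nonempty finite set, let J : V × V → ℝ be symmetric with J(y,z) ≥ 0 and J(y,y) = 0 for all y,z ∈ V, and let K : V → ℝ satisfy K(y) ≥ 0 for all y ∈ V. Let χ be a nonzero finite symmetric Borel measure on ℝ such that ∫ exp(ϑ t²) χ(dt) < ∞ for every ϑ > 0, and let a > 0 satisfy the Wells condition χ([a√2, ∞)) ≥ χ([0, a]). Define H(σ) = (1/2) Σ_{y,z ∈ V} J(y,z) σ_y σ_z + Σ_{y ∈ V} K(y) σ_y for σ ∈ ℝ^V, and H_a(τ) = (a²/2) Σ_{y,z ∈ V} J(y,z) τ_y τ_z + a Σ_{y ∈ V} K(y) τ_y. Then for every x ∈ V, (∫_{ℝ^V} σ_x exp(H(σ)) χ^{⊗V}(dσ)) / (∫_{ℝ^V} exp(H(σ)) χ^{⊗V}(dσ)) ≥ a · (∫_{ℝ^V} τ_x exp(H_a(τ)) μ_I^{⊗V}(dτ)) / (∫_{ℝ^V} exp(H_a(τ)) μ_I^{⊗V}(dτ)). -/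
/-!
Wells' duplication argument. Let `σ` be distributed by `χ^V` and, independently, `τ` by the Ising
measure, and put `u_y = σ_y - a τ_y`, `v_y = σ_y + a τ_y`. Then
`H(σ) + H_a(τ) = ∑ J_yz / 4 (u_y u_z + v_y v_z) + ∑ K_y v_y` has nonnegative coefficients in
`u, v`, so after expanding the exponential, `E[u_x exp (H(σ) + H_a(τ))] ≥ 0` follows once every
monomial in `u, v` has nonnegative expectation. Averaging over `τ` first, such an expectation
factorises over the sites into integrals `∫ ((s - a)^m (s + a)^n + (s + a)^m (s - a)^n) dχ(s) / 2`.
These vanish by symmetry when `m + n` is odd and are pointwise nonnegative when `m, n` are even.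
When `m, n` are odd the integrand is `≥ B` on `{|s| ≥ a√2}`, `≥ 0` on `{|s| ≥ a}` and `≥ -B` on
`{|s| ≤ a}`, and the Wells condition together with symmetry gives `χ{|s| ≤ a} ≤ χ{|s| ≥ a√2}`.
Finally `E[u_x exp (H(σ) + H_a(τ))]` splits over the product into the cross-multiplied inequality.
-/

open MeasureTheory Real Finset
open scoped ENNReal NNReal

namespace Wells

lemma abs_le_exp_sq (t : ℝ) : |t| ≤ exp (t ^ 2) := by
  have : |t| ≤ t ^ 2 + 1 := by nlinarith [sq_abs t, sq_nonneg (|t| - 1)]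
  exact this.trans (add_one_le_exp _)

lemma abs_add_mul_le_exp (s t c : ℝ) : |s + c * t| ≤ exp (2 * (1 + c ^ 2) * (s ^ 2 + t ^ 2)) := by
  refine (abs_le_exp_sq _).trans (exp_le_exp.mpr ?_)
  nlinarith [sq_nonneg (s - c * t), sq_nonneg c, sq_nonneg s, sq_nonneg t, sq_nonneg (c * t)]

/-- Twice the average of `(s - a τ) ^ m * (s + a τ) ^ n` over an Ising spin `τ = ±1`. -/
def wellsPoly (a : ℝ) (m n : ℕ) (s : ℝ) : ℝ :=
  (s - a) ^ m * (s + a) ^ n + (s + a) ^ m * (s - a) ^ n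

section WellsPoly

variable {a : ℝ} {m n : ℕ}

lemma wellsPoly_comm : wellsPoly a m n = wellsPoly a n m := by
  funext s; simp only [wellsPoly]; ring

lemma wellsPoly_neg (s : ℝ) : wellsPoly a m n (-s) = (-1) ^ (m + n) * wellsPoly a m n s := by
  have h₁ : -s - a = -(s + a) := by ring
  have h₂ : -s + a = -(s - a) := by ring
  simp only [wellsPoly, h₁, h₂, neg_pow (s + a), neg_pow (s - a)]
  ring

lemma wellsPoly_eq_mul (hmn : m ≤ n) (s : ℝ) :
    wellsPoly a m n s = (s ^ 2 - a ^ 2) ^ m * wellsPoly a 0 (n - m) s := by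
  obtain ⟨d, rfl⟩ := Nat.exists_eq_add_of_le hmn
  simp only [wellsPoly, Nat.add_sub_cancel_left, show s ^ 2 - a ^ 2 = (s - a) * (s + a) by ring,
    mul_pow, pow_add]
  ring

lemma wellsPoly_zero_eq_sum (d : ℕ) (s : ℝ) :
    wellsPoly a 0 d s =
      ∑ k ∈ range (d + 1), s ^ k * ((a ^ (d - k) + (-a) ^ (d - k)) * d.choose k) := by
  simp only [wellsPoly, pow_zero, one_mul]
  rw [add_pow, sub_eq_add_neg, add_pow, ← sum_add_distrib]
  exact sum_congr rfl fun k _ => by ring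

/-- For even `d`, only even powers of `s` occur in `(s + a) ^ d + (s - a) ^ d`, all with
nonnegative coefficients. -/
lemma wellsPoly_zero_le_of_abs_le {d : ℕ} (hd : Even d) {s t : ℝ} (h : |s| ≤ |t|) :
    wellsPoly a 0 d s ≤ wellsPoly a 0 d t := by
  rw [wellsPoly_zero_eq_sum, wellsPoly_zero_eq_sum]
  refine sum_le_sum fun k hk => ?_
  rcases Nat.even_or_odd (d - k) with he | ho
  · have hk : Even k := (Nat.even_sub (Nat.lt_succ_iff.mp (mem_range.mp hk))).mp he |>.mp hd
    rw [he.neg_pow, ← hk.pow_abs s, ← hk.pow_abs t]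
    have := he.pow_nonneg a
    exact mul_le_mul_of_nonneg_right (by gcongr) (by positivity)
  · simp [ho.neg_pow]

lemma wellsPoly_zero_nonneg {d : ℕ} (hd : Even d) (s : ℝ) : 0 ≤ wellsPoly a 0 d s := by
  refine le_trans ?_ (wellsPoly_zero_le_of_abs_le hd (s := 0) (by simp))
  simp only [wellsPoly, pow_zero, one_mul, zero_add, zero_sub, hd.neg_pow]
  linarith [hd.pow_nonneg a]

end WellsPoly

section Symmetric

variable (χ : Measure ℝ) [χ.IsNegInvariant]

lemma integral_wellsPoly_eq_zero_of_odd_add {a : ℝ} {m n : ℕ} (h : Odd (m + n)) :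
    ∫ s, wellsPoly a m n s ∂χ = 0 := by
  have := integral_neg_eq_self (wellsPoly a m n) χ
  simp only [wellsPoly_neg, h.neg_one_pow, neg_one_mul, integral_neg] at this
  linarith

lemma measure_abs_le_le (a : ℝ) : χ {s | |s| ≤ a} ≤ 2 * χ (Set.Icc 0 a) := by
  have hsub : {s : ℝ | |s| ≤ a} ⊆ Neg.neg ⁻¹' Set.Icc 0 a ∪ Set.Icc 0 a := by
    intro s hs
    rcases le_total s 0 with h | h
    · exact Or.inl ⟨neg_nonneg.mpr h, (neg_le_abs s).trans hs⟩
    · exact Or.inr ⟨h, (le_abs_self s).trans hs⟩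
  calc χ {s | |s| ≤ a} ≤ χ (Neg.neg ⁻¹' Set.Icc 0 a) + χ (Set.Icc 0 a) :=
        (measure_mono hsub).trans (measure_union_le _ _)
    _ = 2 * χ (Set.Icc 0 a) := by rw [Measure.measure_preimage_neg, two_mul]

lemma measure_le_abs_eq {b : ℝ} (hb : 0 < b) : χ {s | b ≤ |s|} = 2 * χ (Set.Ici b) := by
  have hset : {s : ℝ | b ≤ |s|} = Neg.neg ⁻¹' Set.Ici b ∪ Set.Ici b := by
    ext s
    simp only [Set.mem_ofPred_eq, Set.mem_union, Set.mem_preimage, Set.mem_Ici, le_abs', le_neg]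
  have hdisj : Disjoint (Neg.neg ⁻¹' Set.Ici b) (Set.Ici b) :=
    Set.disjoint_left.mpr fun s h₁ h₂ => by
      simp only [Set.mem_preimage, Set.mem_Ici] at h₁ h₂; linarith
  rw [hset, measure_union hdisj measurableSet_Ici, Measure.measure_preimage_neg, two_mul]

lemma measure_abs_le_le_measure_le_abs {a : ℝ} (ha : 0 < a)
    (hWells : χ (Set.Icc 0 a) ≤ χ (Set.Ici (a * √2))) :
    χ {s | |s| ≤ a} ≤ χ {s | a * √2 ≤ |s|} := by
  rw [measure_le_abs_eq χ (by positivity)]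
  exact (measure_abs_le_le χ a).trans (by gcongr)

end Symmetric

lemma indicator_sub_indicator_le_wellsPoly {a : ℝ} (ha : 0 < a) {m n : ℕ} (hm : Odd m)
    (hmn : m ≤ n) (hd : Even (n - m)) (s : ℝ) :
    (a ^ 2) ^ m * wellsPoly a 0 (n - m) (a * √2) *
        ({s | a * √2 ≤ |s|}.indicator 1 s - {s | |s| ≤ a}.indicator 1 s)
      ≤ wellsPoly a m n s := by
  have hgB := wellsPoly_zero_nonneg (a := a) hd (a * √2)
  have hsqrt : a * √2 = |a * √2| := (abs_of_pos (by positivity)).symm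
  have hsq : (a * √2) ^ 2 = 2 * a ^ 2 := by rw [mul_pow, sq_sqrt zero_le_two]; ring
  have hlt : a < a * √2 := lt_mul_of_one_lt_right ha (by simp [Real.lt_sqrt])
  have hs2 : |s| ^ 2 = s ^ 2 := sq_abs s
  rw [wellsPoly_eq_mul hmn]
  by_cases hnear : |s| ≤ a
  · have hfar : ¬ a * √2 ≤ |s| := by linarith
    simp only [Set.indicator, Set.mem_ofPred_eq, hnear, hfar, if_true, if_false, zero_sub,
      Pi.one_apply, mul_neg, mul_one]
    have hpow : (s ^ 2 - a ^ 2) ^ m = -(a ^ 2 - s ^ 2) ^ m := by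
      rw [← hm.neg_pow, neg_sub]
    rw [hpow, neg_mul, neg_le_neg_iff]
    have hs : s ^ 2 ≤ a ^ 2 := by nlinarith [abs_nonneg s]
    exact mul_le_mul (pow_le_pow_left₀ (by linarith) (by nlinarith) m)
      (wellsPoly_zero_le_of_abs_le hd (by rw [← hsqrt]; linarith)) (wellsPoly_zero_nonneg hd s)
      (by positivity)
  · have hs : a ^ 2 ≤ s ^ 2 := by nlinarith
    by_cases hfar : a * √2 ≤ |s|
    · simp only [Set.indicator, Set.mem_ofPred_eq, hnear, hfar, if_true, if_false, sub_zero,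
        Pi.one_apply, mul_one]
      have hs' : 2 * a ^ 2 ≤ s ^ 2 := by rw [← hsq, ← hs2]; gcongr
      exact mul_le_mul (pow_le_pow_left₀ (by positivity) (by linarith) m)
        (wellsPoly_zero_le_of_abs_le hd (by rw [← hsqrt]; exact hfar)) hgB
        (pow_nonneg (by linarith) m)
    · simp only [Set.indicator, Set.mem_ofPred_eq, hnear, hfar, if_false, sub_zero, mul_zero]
      exact mul_nonneg (pow_nonneg (by linarith) m) (wellsPoly_zero_nonneg hd s)

lemma integral_wellsPoly_nonneg_of_odd (χ : Measure ℝ) [IsFiniteMeasure χ] [χ.IsNegInvariant]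
    {a : ℝ} (ha : 0 < a) (hWells : χ (Set.Icc 0 a) ≤ χ (Set.Ici (a * √2))) {m n : ℕ}
    (hm : Odd m) (hmn : m ≤ n) (hd : Even (n - m)) (hint : Integrable (wellsPoly a m n) χ) :
    0 ≤ ∫ s, wellsPoly a m n s ∂χ := by
  have hfar : MeasurableSet {s : ℝ | a * √2 ≤ |s|} :=
    measurableSet_le measurable_const measurable_abs
  have hnear : MeasurableSet {s : ℝ | |s| ≤ a} :=
    measurableSet_le measurable_abs measurable_const
  have hB : 0 ≤ (a ^ 2) ^ m * wellsPoly a 0 (n - m) (a * √2) :=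
    mul_nonneg (by positivity) (wellsPoly_zero_nonneg hd _)
  have hmeas : χ.real {s | |s| ≤ a} ≤ χ.real {s | a * √2 ≤ |s|} :=
    ENNReal.toReal_mono (measure_ne_top _ _) (measure_abs_le_le_measure_le_abs χ ha hWells)
  refine le_trans ?_ (integral_mono (((integrable_const 1).indicator hfar).sub
    ((integrable_const 1).indicator hnear) |>.const_mul _) hint
    (indicator_sub_indicator_le_wellsPoly ha hm hmn hd))
  rw [integral_const_mul, integral_sub ((integrable_const 1).indicator hfar)
    ((integrable_const 1).indicator hnear), integral_indicator_one hfar,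
    integral_indicator_one hnear]
  exact mul_nonneg hB (sub_nonneg.mpr hmeas)

theorem integral_wellsPoly_nonneg (χ : Measure ℝ) [IsFiniteMeasure χ] [χ.IsNegInvariant]
    {a : ℝ} (ha : 0 < a) (hWells : χ (Set.Icc 0 a) ≤ χ (Set.Ici (a * √2))) (m n : ℕ)
    (hint : Integrable (wellsPoly a m n) χ) : 0 ≤ ∫ s, wellsPoly a m n s ∂χ := by
  wlog hmn : m ≤ n generalizing m n
  · rw [wellsPoly_comm] at hint ⊢
    exact this n m hint (le_of_not_ge hmn)
  rcases Nat.even_or_odd (m + n) with hsum | hsum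
  · have hd : Even (n - m) := by
      rw [Nat.even_sub hmn]; rw [Nat.even_add] at hsum; exact hsum.symm
    rcases Nat.even_or_odd m with hm | hm
    · refine integral_nonneg fun s => ?_
      rw [wellsPoly_eq_mul hmn]
      exact mul_nonneg (hm.pow_nonneg _) (wellsPoly_zero_nonneg hd s)
    · exact integral_wellsPoly_nonneg_of_odd χ ha hWells hm hmn hd hint
  · exact (integral_wellsPoly_eq_zero_of_odd_add χ hsum).ge

lemma integrable_of_abs_le_mul_exp {X : Type*} [MeasurableSpace X] {P : Measure X}
    {W f : X → ℝ} (hW : ∀ θ, 0 < θ → Integrable (fun x => exp (θ * W x)) P)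
    (hW₀ : ∀ x, 0 ≤ W x) (hf : AEStronglyMeasurable f P) {C θ : ℝ} (hθ : 0 ≤ θ)
    (hbound : ∀ x, |f x| ≤ C * exp (θ * W x)) : Integrable f P := by
  refine ((hW (θ + 1) (by linarith)).const_mul C).mono' hf (.of_forall fun x => ?_)
  have hC : 0 ≤ C := nonneg_of_mul_nonneg_left ((abs_nonneg _).trans (hbound x)) (exp_pos _)
  rw [norm_eq_abs]
  exact (hbound x).trans (mul_le_mul_of_nonneg_left (exp_le_exp.mpr (by nlinarith [hW₀ x])) hC)

lemma integrable_exp_mul_sum_sq {V : Type*} [Fintype V] {μ : Measure ℝ} [SigmaFinite μ]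
    (hμ : ∀ θ, 0 < θ → Integrable (fun t => exp (θ * t ^ 2)) μ) (θ : ℝ) (hθ : 0 < θ) :
    Integrable (fun σ : V → ℝ => exp (θ * ∑ y, σ y ^ 2)) (Measure.pi fun _ => μ) := by
  simp_rw [mul_sum, exp_sum]
  exact Integrable.fintype_prod (f := fun _ t => exp (θ * t ^ 2)) fun _ => hμ θ hθ

lemma integrable_wellsPoly {χ : Measure ℝ} [IsFiniteMeasure χ]
    (hχ : ∀ θ, 0 < θ → Integrable (fun t => exp (θ * t ^ 2)) χ) (a : ℝ) (m n : ℕ) :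
    Integrable (wellsPoly a m n) χ := by
  set c := 2 * (1 + a ^ 2)
  refine integrable_of_abs_le_mul_exp hχ sq_nonneg (by unfold wellsPoly; fun_prop)
    (C := 2 * exp ((m + n) * c)) (θ := (m + n) * c) (by positivity) fun s => ?_
  have h₁ : |s - a| ≤ exp (c * (s ^ 2 + 1)) := by
    simpa [sub_eq_add_neg, c] using abs_add_mul_le_exp s 1 (-a)
  have h₂ : |s + a| ≤ exp (c * (s ^ 2 + 1)) := by simpa [c] using abs_add_mul_le_exp s 1 a
  calc |wellsPoly a m n s| ≤ |s - a| ^ m * |s + a| ^ n + |s + a| ^ m * |s - a| ^ n := by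
        simpa only [wellsPoly, abs_mul, abs_pow] using
          abs_add_le ((s - a) ^ m * (s + a) ^ n) ((s + a) ^ m * (s - a) ^ n)
    _ ≤ 2 * exp (c * (s ^ 2 + 1)) ^ (m + n) := by
        rw [two_mul, pow_add]; gcongr
    _ = 2 * exp ((m + n) * c) * exp ((m + n) * c * s ^ 2) := by
        rw [mul_assoc (2 : ℝ) (exp _), ← exp_add, ← exp_nat_mul]; push_cast; ring_nf

noncomputable def isingMeasure : Measure ℝ := (2 : ℝ≥0∞)⁻¹ • (Measure.dirac (-1) + Measure.dirac 1)

instance : IsProbabilityMeasure isingMeasure :=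
  ⟨by simp [isingMeasure, ENNReal.inv_two_add_inv_two]⟩

lemma integrable_isingMeasure (f : ℝ → ℝ) : Integrable f isingMeasure :=
  ((integrable_dirac (by simp)).add_measure (integrable_dirac (by simp))).smul_measure (by simp)

lemma integral_isingMeasure (f : ℝ → ℝ) : ∫ t, f t ∂isingMeasure = (f (-1) + f 1) / 2 := by
  rw [isingMeasure, integral_smul_measure, integral_add_measure (integrable_dirac (by simp))
    (integrable_dirac (by simp)), integral_dirac, integral_dirac]
  simp [div_eq_inv_mul]

lemma integral_isingMeasure_spin (a s : ℝ) (m n : ℕ) :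
    ∫ t, (s - a * t) ^ m * (s + a * t) ^ n ∂isingMeasure = wellsPoly a m n s / 2 := by
  rw [integral_isingMeasure, wellsPoly]
  ring_nf

section Cone

variable {X : Type*} [MeasurableSpace X]

def nonnegIntegralCone (P : Measure X) : Submodule ℝ≥0 (X → ℝ) where
  carrier := {f | Integrable f P ∧ 0 ≤ ∫ x, f x ∂P}
  add_mem' hf hg := ⟨hf.1.add hg.1, by rw [integral_add' hf.1 hg.1]; exact add_nonneg hf.2 hg.2⟩
  zero_mem' := ⟨integrable_zero _ _ _, by simp⟩
  smul_mem' c f hf := by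
    simp only [Set.mem_ofPred_eq, NNReal.smul_def, Pi.smul_apply]
    exact ⟨hf.1.smul _, by rw [integral_smul]; exact smul_nonneg c.2 hf.2⟩

/-- Expanding the exponential, `u * exp Q` is a series of elements of the algebra generated
by `s` with nonnegative coefficients. -/
theorem integral_mul_exp_nonneg_of_mem_adjoin {P : Measure X} {s : Set (X → ℝ)}
    (hs : ∀ f ∈ Submonoid.closure s, f ∈ nonnegIntegralCone P) {u Q : X → ℝ}
    (hu : u ∈ Algebra.adjoin ℝ≥0 s) (hQ : Q ∈ Algebra.adjoin ℝ≥0 s)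
    (hdom : Integrable (fun x => |u x| * exp |Q x|) P) :
    0 ≤ ∫ x, u x * exp (Q x) ∂P := by
  have hcone : Subalgebra.toSubmodule (Algebra.adjoin ℝ≥0 s) ≤ nonnegIntegralCone P := by
    rw [Algebra.adjoin_eq_span, Submodule.span_le]; exact hs
  have hexp : ∀ t : ℝ, HasSum (fun k => t ^ k / k.factorial) (exp t) := fun t => by
    rw [exp_eq_exp_ℝ]; exact NormedSpace.expSeries_div_hasSum_exp t
  set F : ℕ → X → ℝ := fun k => (k.factorial : ℝ≥0)⁻¹ • (u * Q ^ k)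
  have hF : ∀ k, F k ∈ nonnegIntegralCone P := fun k =>
    hcone (Subalgebra.smul_mem _ (Subalgebra.mul_mem _ hu (Subalgebra.pow_mem _ hQ k)) _)
  have hFx : ∀ k x, F k x = u x * (Q x ^ k / k.factorial) := fun k x => by
    simp only [F, Pi.smul_apply, Pi.mul_apply, Pi.pow_apply, NNReal.smul_def, NNReal.coe_inv,
      NNReal.coe_natCast, smul_eq_mul]
    ring
  have hsum := hasSum_integral_of_dominated_convergence (F := F) (f := fun x => u x * exp (Q x))
    (fun k x => |u x| * (|Q x| ^ k / k.factorial)) (fun k => (hF k).1.aestronglyMeasurable)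
    (fun k => .of_forall fun x => by
      rw [hFx, norm_eq_abs, abs_mul, abs_div, abs_pow, Nat.abs_cast])
    (.of_forall fun x => ((hexp |Q x|).mul_left |u x|).summable)
    (by simpa only [((hexp _).mul_left _).tsum_eq] using hdom)
    (.of_forall fun x => by simpa only [hFx] using (hexp (Q x)).mul_left (u x))
  exact hsum.nonneg fun k => (hF k).2

end Cone

instance {ι : Type*} [Fintype ι] {μ : Measure ℝ} [SigmaFinite μ] [NeZero μ] :
    NeZero (Measure.pi fun _ : ι => μ) :=
  ⟨by
    rw [← Measure.measure_univ_ne_zero, Measure.pi_univ]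
    exact prod_ne_zero_iff.mpr fun _ _ => Measure.measure_univ_ne_zero.mpr (NeZero.ne μ)⟩

section Hamiltonian

variable {V : Type*} [Fintype V]

def hamiltonian (J : V → V → ℝ) (K : V → ℝ) (c₀ c₁ : ℝ) (σ : V → ℝ) : ℝ :=
  c₀ * ∑ y, ∑ z, J y z * σ y * σ z + c₁ * ∑ y, K y * σ y

variable {J : V → V → ℝ} {K : V → ℝ} {c₀ c₁ : ℝ}

@[fun_prop]
lemma continuous_hamiltonian : Continuous (hamiltonian J K c₀ c₁) := by
  unfold hamiltonian; fun_prop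

lemma exists_abs_hamiltonian_le (hJ : ∀ y z, 0 ≤ J y z) (hK : ∀ y, 0 ≤ K y) (hc₀ : 0 ≤ c₀)
    (hc₁ : 0 ≤ c₁) : ∃ C, 0 ≤ C ∧ ∀ σ : V → ℝ,
      |hamiltonian J K c₀ c₁ σ| ≤ C * (1 + ∑ y, σ y ^ 2) := by
  have hJ' := sum_nonneg fun y (_ : y ∈ univ) => sum_nonneg fun z (_ : z ∈ univ) => hJ y z
  have hK' := sum_nonneg fun y (_ : y ∈ univ) => hK y
  refine ⟨c₀ * ∑ y, ∑ z, J y z + c₁ * ∑ y, K y, by positivity, fun σ => ?_⟩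
  set S := ∑ y, σ y ^ 2
  have hsq : ∀ y, σ y ^ 2 ≤ S := fun y =>
    single_le_sum (f := fun y => σ y ^ 2) (fun _ _ => sq_nonneg _) (mem_univ y)
  have hquad : |∑ y, ∑ z, J y z * σ y * σ z| ≤ (∑ y, ∑ z, J y z) * (1 + S) := by
    rw [sum_mul]
    refine (abs_sum_le_sum_abs _ _).trans (sum_le_sum fun y _ => ?_)
    rw [sum_mul]
    refine (abs_sum_le_sum_abs _ _).trans (sum_le_sum fun z _ => ?_)
    rw [abs_mul, abs_mul, abs_of_nonneg (hJ y z), mul_assoc]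
    have hσ : |σ y| * |σ z| ≤ 1 + S := by
      nlinarith [hsq y, hsq z, sq_abs (σ y), sq_abs (σ z), sq_nonneg (|σ y| - |σ z|)]
    exact mul_le_mul_of_nonneg_left hσ (hJ y z)
  have hlin : |∑ y, K y * σ y| ≤ (∑ y, K y) * (1 + S) := by
    rw [sum_mul]
    refine (abs_sum_le_sum_abs _ _).trans (sum_le_sum fun y _ => ?_)
    rw [abs_mul, abs_of_nonneg (hK y)]
    have hσ : |σ y| ≤ 1 + S := by nlinarith [hsq y, sq_abs (σ y), sq_nonneg (|σ y| - 1)]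
    exact mul_le_mul_of_nonneg_left hσ (hK y)
  calc |hamiltonian J K c₀ c₁ σ|
      ≤ c₀ * |∑ y, ∑ z, J y z * σ y * σ z| + c₁ * |∑ y, K y * σ y| := by
        refine (abs_add_le _ _).trans_eq ?_
        rw [abs_mul, abs_mul, abs_of_nonneg hc₀, abs_of_nonneg hc₁]
    _ ≤ _ := by rw [add_mul, mul_assoc, mul_assoc]; gcongr

lemma integrable_mul_exp_hamiltonian (hJ : ∀ y z, 0 ≤ J y z) (hK : ∀ y, 0 ≤ K y)
    (hc₀ : 0 ≤ c₀) (hc₁ : 0 ≤ c₁) {μ : Measure ℝ} [IsFiniteMeasure μ]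
    (hμ : ∀ θ, 0 < θ → Integrable (fun t => exp (θ * t ^ 2)) μ) (k : ℕ) (x : V) :
    Integrable (fun σ => σ x ^ k * exp (hamiltonian J K c₀ c₁ σ)) (Measure.pi fun _ => μ) := by
  obtain ⟨C, hC, hH⟩ := exists_abs_hamiltonian_le hJ hK hc₀ hc₁
  refine integrable_of_abs_le_mul_exp (integrable_exp_mul_sum_sq hμ) (fun σ => by positivity)
    (by fun_prop) (C := exp C) (θ := k + C) (by positivity) fun σ => ?_
  have hx : σ x ^ 2 ≤ ∑ y, σ y ^ 2 :=
    single_le_sum (f := fun y => σ y ^ 2) (fun _ _ => sq_nonneg _) (mem_univ x)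
  calc |σ x ^ k * exp (hamiltonian J K c₀ c₁ σ)|
      = |σ x| ^ k * exp (hamiltonian J K c₀ c₁ σ) := by rw [abs_mul, abs_pow, abs_exp]
    _ ≤ exp (∑ y, σ y ^ 2) ^ k * exp (C * (1 + ∑ y, σ y ^ 2)) := by
        gcongr
        · exact (abs_le_exp_sq _).trans (exp_le_exp.mpr hx)
        · exact (abs_le.mp (hH σ)).2
    _ = exp C * exp ((k + C) * ∑ y, σ y ^ 2) := by
        rw [← exp_nat_mul, ← exp_add, ← exp_add]; ring_nf

end Hamiltonian

noncomputable abbrev duplicatedMeasure (V : Type*) [Fintype V] (χ : Measure ℝ) :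
    Measure ((V → ℝ) × (V → ℝ)) :=
  (Measure.pi fun _ => χ).prod (Measure.pi fun _ => isingMeasure)

section Duplicated

variable {V : Type*} [Fintype V]

def spinDiff (a : ℝ) (y : V) (p : (V → ℝ) × (V → ℝ)) : ℝ := p.1 y - a * p.2 y

def spinSum (a : ℝ) (y : V) (p : (V → ℝ) × (V → ℝ)) : ℝ := p.1 y + a * p.2 y

def spinGenerators (a : ℝ) : Set ((V → ℝ) × (V → ℝ) → ℝ) :=
  Set.range (spinDiff a) ∪ Set.range (spinSum a)

def spinMonomial (a : ℝ) (m n : V → ℕ) (p : (V → ℝ) × (V → ℝ)) : ℝ :=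
  ∏ y, spinDiff a y p ^ m y * spinSum a y p ^ n y

lemma spinMonomial_add (a : ℝ) (m n m' n' : V → ℕ) :
    spinMonomial a (m + m') (n + n') = spinMonomial a m n * spinMonomial a m' n' := by
  funext p
  simp only [spinMonomial, Pi.mul_apply, Pi.add_apply, pow_add, ← prod_mul_distrib]
  exact prod_congr rfl fun _ _ => by ring

def spinMonomials (a : ℝ) : Submonoid ((V → ℝ) × (V → ℝ) → ℝ) where
  carrier := Set.range fun mn : (V → ℕ) × (V → ℕ) => spinMonomial a mn.1 mn.2
  mul_mem' := by
    rintro _ _ ⟨⟨m, n⟩, rfl⟩ ⟨⟨m', n'⟩, rfl⟩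
    exact ⟨(m + m', n + n'), spinMonomial_add a m n m' n'⟩
  one_mem' := ⟨(0, 0), by funext p; simp [spinMonomial]⟩

lemma closure_spinGenerators_le (a : ℝ) :
    Submonoid.closure (spinGenerators (V := V) a) ≤ spinMonomials a := by
  classical
  rw [Submonoid.closure_le]
  rintro _ (⟨y, rfl⟩ | ⟨y, rfl⟩)
  · exact ⟨(Pi.single y 1, 0), by funext p; simp [spinMonomial, Pi.single_apply]⟩
  · exact ⟨(0, Pi.single y 1), by funext p; simp [spinMonomial, Pi.single_apply]⟩

def sqNorm (p : (V → ℝ) × (V → ℝ)) : ℝ := ∑ y, p.1 y ^ 2 + ∑ y, p.2 y ^ 2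

lemma sqNorm_nonneg (p : (V → ℝ) × (V → ℝ)) : 0 ≤ sqNorm p := by
  unfold sqNorm; positivity

lemma abs_add_mul_le_exp_sqNorm (c : ℝ) (y : V) (p : (V → ℝ) × (V → ℝ)) :
    |p.1 y + c * p.2 y| ≤ exp (2 * (1 + c ^ 2) * sqNorm p) := by
  have h₁ := single_le_sum (f := fun y => p.1 y ^ 2) (fun _ _ => sq_nonneg _) (mem_univ y)
  have h₂ := single_le_sum (f := fun y => p.2 y ^ 2) (fun _ _ => sq_nonneg _) (mem_univ y)
  refine (abs_add_mul_le_exp _ _ c).trans (exp_le_exp.mpr ?_)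
  unfold sqNorm
  gcongr

lemma abs_spinDiff_le (a : ℝ) (y : V) (p : (V → ℝ) × (V → ℝ)) :
    |spinDiff a y p| ≤ exp (2 * (1 + a ^ 2) * sqNorm p) := by
  simpa [spinDiff, sub_eq_add_neg] using abs_add_mul_le_exp_sqNorm (-a) y p

lemma abs_spinSum_le (a : ℝ) (y : V) (p : (V → ℝ) × (V → ℝ)) :
    |spinSum a y p| ≤ exp (2 * (1 + a ^ 2) * sqNorm p) :=
  abs_add_mul_le_exp_sqNorm a y p

lemma abs_spinMonomial_le (a : ℝ) (m n : V → ℕ) (p : (V → ℝ) × (V → ℝ)) :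
    |spinMonomial a m n p| ≤ exp (2 * (1 + a ^ 2) * sqNorm p) ^ ∑ y, (m y + n y) := by
  rw [spinMonomial, abs_prod, ← prod_pow_eq_pow_sum]
  refine prod_le_prod (fun _ _ => abs_nonneg _) fun y _ => ?_
  rw [abs_mul, abs_pow, abs_pow, pow_add]
  gcongr
  exacts [abs_spinDiff_le a y p, abs_spinSum_le a y p]

variable {χ : Measure ℝ} [IsFiniteMeasure χ]
  (hχ : ∀ θ, 0 < θ → Integrable (fun t => exp (θ * t ^ 2)) χ)
include hχ

lemma integrable_exp_mul_sqNorm (θ : ℝ) (hθ : 0 < θ) :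
    Integrable (fun p => exp (θ * sqNorm p)) (duplicatedMeasure V χ) := by
  simp_rw [sqNorm, mul_add, exp_add]
  exact (integrable_exp_mul_sum_sq hχ θ hθ).mul_prod
    (integrable_exp_mul_sum_sq (fun _ _ => integrable_isingMeasure _) θ hθ)

lemma integrable_spinMonomial (a : ℝ) (m n : V → ℕ) :
    Integrable (spinMonomial a m n) (duplicatedMeasure V χ) := by
  refine integrable_of_abs_le_mul_exp (integrable_exp_mul_sqNorm hχ) sqNorm_nonneg
    (by unfold spinMonomial spinDiff spinSum; fun_prop) (C := 1)
    (θ := (∑ y, (m y + n y) : ℕ) * (2 * (1 + a ^ 2))) (by positivity) fun p => ?_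
  rw [one_mul, mul_assoc, exp_nat_mul]
  exact abs_spinMonomial_le a m n p

omit hχ in
lemma integral_spinMonomial (a : ℝ) (m n : V → ℕ)
    (hint : Integrable (spinMonomial a m n) (duplicatedMeasure V χ)) :
    ∫ p, spinMonomial a m n p ∂duplicatedMeasure V χ =
      ∏ y, (∫ s, wellsPoly a (m y) (n y) s ∂χ) / 2 := by
  rw [integral_prod _ hint]
  have hinner (σ : V → ℝ) : ∫ τ, spinMonomial a m n (σ, τ) ∂(Measure.pi fun _ => isingMeasure) =
      ∏ y, wellsPoly a (m y) (n y) (σ y) / 2 :=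
    (integral_fintype_prod_eq_prod fun y t => (σ y - a * t) ^ m y * (σ y + a * t) ^ n y).trans
      (prod_congr rfl fun y _ => integral_isingMeasure_spin a (σ y) (m y) (n y))
  simp_rw [hinner, ← integral_div]
  exact integral_fintype_prod_eq_prod fun y s => wellsPoly a (m y) (n y) s / 2

end Duplicated

section Positivity

variable {V : Type*} [Fintype V] {J : V → V → ℝ} {K : V → ℝ}

noncomputable def duplicatedHamiltonian (J : V → V → ℝ) (K : V → ℝ) (a : ℝ)
    (p : (V → ℝ) × (V → ℝ)) : ℝ :=
  hamiltonian J K (1 / 2) 1 p.1 + hamiltonian J K (a ^ 2 / 2) a p.2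

/-- Wells' identity: in the variables `σ ∓ a τ` the joint Hamiltonian has nonnegative
coefficients. -/
lemma duplicatedHamiltonian_eq (a : ℝ) (p : (V → ℝ) × (V → ℝ)) :
    duplicatedHamiltonian J K a p =
      ∑ y, ∑ z, J y z / 4 * (spinDiff a y p * spinDiff a z p + spinSum a y p * spinSum a z p) +
        ∑ y, K y * spinSum a y p := by
  have hquad : ∀ y z,
      J y z / 4 * (spinDiff a y p * spinDiff a z p + spinSum a y p * spinSum a z p) =
        1 / 2 * (J y z * p.1 y * p.1 z) + a ^ 2 / 2 * (J y z * p.2 y * p.2 z) := fun y z => by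
    simp only [spinDiff, spinSum]; ring
  have hlin : ∀ y, K y * spinSum a y p = 1 * (K y * p.1 y) + a * (K y * p.2 y) := fun y => by
    simp only [spinSum]; ring
  simp only [hquad, hlin, sum_add_distrib, ← mul_sum, duplicatedHamiltonian, hamiltonian]
  ring

lemma duplicatedHamiltonian_mem_adjoin (hJ : ∀ y z, 0 ≤ J y z) (hK : ∀ y, 0 ≤ K y) (a : ℝ) :
    duplicatedHamiltonian J K a ∈ Algebra.adjoin ℝ≥0 (spinGenerators a) := by
  have hu : ∀ y, spinDiff a y ∈ Algebra.adjoin ℝ≥0 (spinGenerators (V := V) a) := fun y =>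
    Algebra.subset_adjoin (Or.inl ⟨y, rfl⟩)
  have hv : ∀ y, spinSum a y ∈ Algebra.adjoin ℝ≥0 (spinGenerators (V := V) a) := fun y =>
    Algebra.subset_adjoin (Or.inr ⟨y, rfl⟩)
  have hexpand : duplicatedHamiltonian J K a =
      ∑ y, ∑ z, (⟨J y z / 4, div_nonneg (hJ y z) zero_le_four⟩ : ℝ≥0) •
          (spinDiff a y * spinDiff a z + spinSum a y * spinSum a z) +
        ∑ y, (⟨K y, hK y⟩ : ℝ≥0) • spinSum a y := by
    funext p
    rw [duplicatedHamiltonian_eq]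
    simp [mul_add]
  rw [hexpand]
  exact add_mem (sum_mem fun y _ => sum_mem fun z _ => Subalgebra.smul_mem _
    (add_mem (mul_mem (hu y) (hu z)) (mul_mem (hv y) (hv z))) _)
    (sum_mem fun y _ => Subalgebra.smul_mem _ (hv y) _)

variable {χ : Measure ℝ} [IsFiniteMeasure χ]

lemma integrable_abs_spinDiff_mul_exp_abs
    (hχ : ∀ θ, 0 < θ → Integrable (fun t => exp (θ * t ^ 2)) χ) (hJ : ∀ y z, 0 ≤ J y z)
    (hK : ∀ y, 0 ≤ K y) {a : ℝ} (ha : 0 ≤ a) (x : V) :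
    Integrable (fun p => |spinDiff a x p| * exp |duplicatedHamiltonian J K a p|)
      (duplicatedMeasure V χ) := by
  obtain ⟨C₁, hC₁, hH₁⟩ := exists_abs_hamiltonian_le hJ hK (by norm_num : (0 : ℝ) ≤ 1 / 2)
    zero_le_one
  obtain ⟨C₂, hC₂, hH₂⟩ := exists_abs_hamiltonian_le hJ hK (by positivity : 0 ≤ a ^ 2 / 2) ha
  refine integrable_of_abs_le_mul_exp (integrable_exp_mul_sqNorm hχ) sqNorm_nonneg
    (by unfold spinDiff duplicatedHamiltonian; fun_prop) (C := exp (C₁ + C₂))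
    (θ := 2 * (1 + a ^ 2) + (C₁ + C₂)) (by positivity) fun p => ?_
  have hQ : |duplicatedHamiltonian J K a p| ≤ (C₁ + C₂) * (1 + sqNorm p) := by
    have hS₁ := sum_nonneg fun y (_ : y ∈ univ) => sq_nonneg (p.1 y)
    have hS₂ := sum_nonneg fun y (_ : y ∈ univ) => sq_nonneg (p.2 y)
    refine (abs_add_le _ _).trans ((add_le_add (hH₁ p.1) (hH₂ p.2)).trans ?_)
    unfold sqNorm
    nlinarith [mul_nonneg hC₁ hS₂, mul_nonneg hC₂ hS₁]
  rw [abs_of_nonneg (by positivity), ← exp_add, mul_comm]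
  calc exp |duplicatedHamiltonian J K a p| * |spinDiff a x p|
      ≤ exp ((C₁ + C₂) * (1 + sqNorm p)) * exp (2 * (1 + a ^ 2) * sqNorm p) := by
        gcongr
        exact abs_spinDiff_le a x p
    _ = exp (C₁ + C₂ + (2 * (1 + a ^ 2) + (C₁ + C₂)) * sqNorm p) := by
        rw [← exp_add]; ring_nf

theorem integral_spinDiff_mul_exp_nonneg [χ.IsNegInvariant]
    (hχ : ∀ θ, 0 < θ → Integrable (fun t => exp (θ * t ^ 2)) χ)
    (hJ : ∀ y z, 0 ≤ J y z) (hK : ∀ y, 0 ≤ K y) {a : ℝ} (ha : 0 < a)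
    (hWells : χ (Set.Icc 0 a) ≤ χ (Set.Ici (a * √2))) (x : V) :
    0 ≤ ∫ p, spinDiff a x p *
      exp (duplicatedHamiltonian J K a p) ∂duplicatedMeasure V χ := by
  refine integral_mul_exp_nonneg_of_mem_adjoin (s := spinGenerators a) (fun f hf => ?_)
    (Algebra.subset_adjoin (Or.inl ⟨x, rfl⟩)) (duplicatedHamiltonian_mem_adjoin hJ hK a)
    (integrable_abs_spinDiff_mul_exp_abs hχ hJ hK ha.le x)
  obtain ⟨⟨m, n⟩, rfl⟩ := closure_spinGenerators_le a hf
  refine ⟨integrable_spinMonomial hχ a m n, ?_⟩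
  rw [integral_spinMonomial a m n (integrable_spinMonomial hχ a m n)]
  exact prod_nonneg fun y _ => div_nonneg
    (integral_wellsPoly_nonneg χ ha hWells _ _ (integrable_wellsPoly hχ a _ _)) zero_le_two

omit [Fintype V] in
lemma integral_spinDiff_mul_exp_add {μ ν : Measure (V → ℝ)} [SFinite μ] [SFinite ν]
    {H₁ H₂ : (V → ℝ) → ℝ} (a : ℝ) (x : V)
    (hE₁ : Integrable (fun σ => exp (H₁ σ)) μ) (hN₁ : Integrable (fun σ => σ x * exp (H₁ σ)) μ)
    (hE₂ : Integrable (fun τ => exp (H₂ τ)) ν) (hN₂ : Integrable (fun τ => τ x * exp (H₂ τ)) ν) :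
    ∫ p, spinDiff a x p * exp (H₁ p.1 + H₂ p.2) ∂μ.prod ν =
      (∫ σ, σ x * exp (H₁ σ) ∂μ) * (∫ τ, exp (H₂ τ) ∂ν) -
        a * ((∫ σ, exp (H₁ σ) ∂μ) * ∫ τ, τ x * exp (H₂ τ) ∂ν) := by
  have hsplit : ∀ p : (V → ℝ) × (V → ℝ), spinDiff a x p * exp (H₁ p.1 + H₂ p.2) =
      p.1 x * exp (H₁ p.1) * exp (H₂ p.2) - a * (exp (H₁ p.1) * (p.2 x * exp (H₂ p.2))) :=
    fun p => by rw [spinDiff, exp_add]; ring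
  simp_rw [hsplit]
  rw [integral_sub (hN₁.mul_prod hE₂) ((hE₁.mul_prod hN₂).const_mul a), integral_const_mul,
    integral_prod_mul (fun σ => σ x * exp (H₁ σ)) (fun τ => exp (H₂ τ)),
    integral_prod_mul (fun σ => exp (H₁ σ)) (fun τ => τ x * exp (H₂ τ))]

end Positivity

end Wells

open Wells

theorem wells_inequality_general
    {V : Type*} [Fintype V]
    (J : V → V → ℝ)
    (hJnn : ∀ y z, 0 ≤ J y z)
    (K : V → ℝ) (hK : ∀ y, 0 ≤ K y)
    (χ : Measure ℝ) [IsFiniteMeasure χ] (hχne : χ ≠ 0)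
    (hχsym : χ.map (fun t => -t) = χ)
    (hχexp : ∀ ϑ : ℝ, 0 < ϑ → Integrable (fun t => Real.exp (ϑ * t ^ 2)) χ)
    (a : ℝ) (ha : 0 < a)
    (hWells : χ (Set.Icc 0 a) ≤ χ (Set.Ici (a * Real.sqrt 2)))
    (x : V) :
    a * ((∫ τ : V → ℝ, τ x *
            Real.exp (a ^ 2 / 2 * ∑ y, ∑ z, J y z * τ y * τ z + a * ∑ y, K y * τ y)
            ∂(Measure.pi fun _ : V =>
              ((2 : ℝ≥0∞)⁻¹ • (Measure.dirac (-1 : ℝ) + Measure.dirac (1 : ℝ))))) /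
          (∫ τ : V → ℝ,
            Real.exp (a ^ 2 / 2 * ∑ y, ∑ z, J y z * τ y * τ z + a * ∑ y, K y * τ y)
            ∂(Measure.pi fun _ : V =>
              ((2 : ℝ≥0∞)⁻¹ • (Measure.dirac (-1 : ℝ) + Measure.dirac (1 : ℝ))))))
      ≤
      (∫ σ : V → ℝ, σ x *
          Real.exp ((1 / 2) * ∑ y, ∑ z, J y z * σ y * σ z + ∑ y, K y * σ y)
          ∂(Measure.pi fun _ : V => χ)) /
        (∫ σ : V → ℝ,
          Real.exp ((1 / 2) * ∑ y, ∑ z, J y z * σ y * σ z + ∑ y, K y * σ y)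
          ∂(Measure.pi fun _ : V => χ)) := by
  have : χ.IsNegInvariant := ⟨hχsym⟩
  have : NeZero χ := ⟨hχne⟩
  have hH : ∀ σ : V → ℝ, 1 / 2 * ∑ y, ∑ z, J y z * σ y * σ z + ∑ y, K y * σ y =
      hamiltonian J K (1 / 2) 1 σ := fun σ => by rw [hamiltonian, one_mul]
  simp only [hH]
  change a * ((∫ τ, τ x * exp (hamiltonian J K (a ^ 2 / 2) a τ)
      ∂Measure.pi fun _ => isingMeasure) /
    ∫ τ, exp (hamiltonian J K (a ^ 2 / 2) a τ) ∂Measure.pi fun _ => isingMeasure) ≤ _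
  have hI : ∀ θ, 0 < θ → Integrable (fun t => exp (θ * t ^ 2)) isingMeasure :=
    fun _ _ => integrable_isingMeasure _
  have hE₁ := integrable_mul_exp_hamiltonian hJnn hK (by norm_num : (0 : ℝ) ≤ 1 / 2) zero_le_one
    hχexp 0 x
  have hN₁ := integrable_mul_exp_hamiltonian hJnn hK (by norm_num : (0 : ℝ) ≤ 1 / 2) zero_le_one
    hχexp 1 x
  have hE₂ := integrable_mul_exp_hamiltonian hJnn hK (by positivity : 0 ≤ a ^ 2 / 2) ha.le hI 0 x
  have hN₂ := integrable_mul_exp_hamiltonian hJnn hK (by positivity : 0 ≤ a ^ 2 / 2) ha.le hI 1 x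
  simp only [pow_zero, one_mul, pow_one] at hE₁ hN₁ hE₂ hN₂
  have hkey := integral_spinDiff_mul_exp_nonneg hχexp hJnn hK ha hWells x
  unfold duplicatedHamiltonian at hkey
  rw [integral_spinDiff_mul_exp_add a x hE₁ hN₁ hE₂ hN₂] at hkey
  rw [← mul_div_assoc, div_le_div_iff₀ (integral_exp_pos hE₂) (integral_exp_pos hE₁)]
  linarith

/-- Finite-volume Wells inequality. -/
theorem wells_inequality
    {V : Type*} [Fintype V] [Nonempty V]
    (J : V → V → ℝ) (hJsym : ∀ y z, J y z = J z y)
    (hJnn : ∀ y z, 0 ≤ J y z) (hJdiag : ∀ y, J y y = 0)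
    (K : V → ℝ) (hK : ∀ y, 0 ≤ K y)
    (χ : Measure ℝ) [IsFiniteMeasure χ] (hχne : χ ≠ 0)
    (hχsym : χ.map (fun t => -t) = χ)
    (hχexp : ∀ ϑ : ℝ, 0 < ϑ → Integrable (fun t => Real.exp (ϑ * t ^ 2)) χ)
    (a : ℝ) (ha : 0 < a)
    (hWells : χ (Set.Icc 0 a) ≤ χ (Set.Ici (a * Real.sqrt 2)))
    (x : V) :
    a * ((∫ τ : V → ℝ, τ x *
            Real.exp (a ^ 2 / 2 * ∑ y, ∑ z, J y z * τ y * τ z + a * ∑ y, K y * τ y)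
            ∂(Measure.pi fun _ : V =>
              ((2 : ℝ≥0∞)⁻¹ • (Measure.dirac (-1 : ℝ) + Measure.dirac (1 : ℝ))))) /
          (∫ τ : V → ℝ,
            Real.exp (a ^ 2 / 2 * ∑ y, ∑ z, J y z * τ y * τ z + a * ∑ y, K y * τ y)
            ∂(Measure.pi fun _ : V =>
              ((2 : ℝ≥0∞)⁻¹ • (Measure.dirac (-1 : ℝ) + Measure.dirac (1 : ℝ))))))
      ≤
      (∫ σ : V → ℝ, σ x *
          Real.exp ((1 / 2) * ∑ y, ∑ z, J y z * σ y * σ z + ∑ y, K y * σ y)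
          ∂(Measure.pi fun _ : V => χ)) /
        (∫ σ : V → ℝ,
          Real.exp ((1 / 2) * ∑ y, ∑ z, J y z * σ y * σ z + ∑ y, K y * σ y)
          ∂(Measure.pi fun _ : V => χ)) :=
  wells_inequality_general J hJnn K hK χ hχne hχsym hχexp a ha hWells x
end

section
/- One-site positivity for all powers. Let χ be a finite symmetric Borel measure on ℝ all of whose absolute moments are finite (∫ |t|^n χ(dt) < ∞ for every n ∈ ℕ), and let a > 0 satisfy the Wells condition χ([a√2, ∞)) ≥ χ([0, a]). Then for all m, n ∈ ℕ, ∫_ℝ [ (σ + a)^m (σ − a)^n + (σ − a)^m (σ + a)^n ] χ(dσ) ≥ 0. -/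
/-!
For odd `m + n` the integrand is an odd function, so its integral against the symmetric `χ`
vanishes. Otherwise write `n = m + k` with `k` even; the integrand factors as
`(σ² - a²)^m * g σ` with `g σ = (σ - a)^k + (σ + a)^k` even and convex, hence nondecreasing
in `|σ|`. With `C = (a²)^m * g a`, the integrand is `≥ -C` on `[-a, a]`, `≥ C` where
`|σ| ≥ a√2`, and `≥ 0` elsewhere. By symmetry and the Wells condition the region `|σ| ≥ a√2`
carries at least the mass of `[-a, a]`, so the integral dominates `C` times a nonnegative
difference of masses.
-/

open MeasureTheory Set

theorem integral_eq_zero_of_odd {G E : Type*} [MeasurableSpace G] [AddGroup G] [MeasurableNeg G]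
    [NormedAddCommGroup E] [NormedSpace ℝ E] (μ : Measure G) [μ.IsNegInvariant] {f : G → E}
    (hf : ∀ x, f (-x) = -f x) : ∫ x, f x ∂μ = 0 := by
  have h := integral_neg_eq_self f μ
  simp only [hf, integral_neg] at h
  have h2 : (2 : ℝ) • ∫ x, f x ∂μ = 0 := by
    rw [two_smul]; nth_rewrite 1 [← h]; exact neg_add_cancel _
  exact (smul_eq_zero.mp h2).resolve_left two_ne_zero

theorem integral_nonneg_of_measure_le_of_bounds {α : Type*} [MeasurableSpace α] {μ : Measure α}
    [IsFiniteMeasure μ] {f : α → ℝ} (hf : Integrable f μ) {A B : Set α} (hA : MeasurableSet A)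
    (hB : MeasurableSet B) (hAB : μ A ≤ μ B) {C : ℝ} (hC : 0 ≤ C)
    (hfA : ∀ x ∈ A, -C ≤ f x) (hfB : ∀ x ∈ B, C ≤ f x) (hf0 : ∀ x ∉ A, 0 ≤ f x) :
    0 ≤ ∫ x, f x ∂μ := by
  set g := B.indicator (fun _ => C) - A.indicator (fun _ => C)
  have hg : Integrable g μ :=
    ((integrable_const C).indicator hB).sub ((integrable_const C).indicator hA)
  have hgf : g ≤ f := by
    intro x
    by_cases hxA : x ∈ A <;> by_cases hxB : x ∈ B <;>
      simp only [g, Pi.sub_apply, indicator, hxA, hxB, if_true, if_false]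
    · linarith [hfB x hxB]
    · linarith [hfA x hxA]
    · linarith [hfB x hxB]
    · linarith [hf0 x hxA]
  have hμ : μ.real A ≤ μ.real B := ENNReal.toReal_mono (measure_ne_top μ B) hAB
  calc 0 ≤ μ.real B * C - μ.real A * C := by nlinarith
    _ = ∫ x, g x ∂μ := by
      simp only [g, Pi.sub_apply]
      rw [integral_sub ((integrable_const C).indicator hB) ((integrable_const C).indicator hA),
        integral_indicator_const C hB, integral_indicator_const C hA, smul_eq_mul, smul_eq_mul]
    _ ≤ ∫ x, f x ∂μ := integral_mono hg hf hgf

theorem ConvexOn.le_of_abs_le {f : ℝ → ℝ} (hf : ConvexOn ℝ univ f) (heven : ∀ x, f (-x) = f x)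
    {x y : ℝ} (h : |x| ≤ |y|) : f x ≤ f y := by
  have hy : f |y| = f y := by rcases abs_choice y with h | h <;> simp [h, heven]
  calc f x ≤ max (f (-|y|)) (f |y|) := hf.le_max_of_mem_Icc trivial trivial (abs_le.mp h)
    _ = f y := by rw [heven, max_self, hy]

theorem Even.pow_sub_add_pow_add_le_of_abs_le {k : ℕ} (hk : Even k) (a : ℝ) {σ τ : ℝ}
    (h : |σ| ≤ |τ|) : (σ - a) ^ k + (σ + a) ^ k ≤ (τ - a) ^ k + (τ + a) ^ k := by
  refine ConvexOn.le_of_abs_le (f := fun σ => (σ - a) ^ k + (σ + a) ^ k) ?_ (fun σ => ?_) h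
  · have hshift (c : ℝ) : ConvexOn ℝ univ fun σ : ℝ => (σ + c) ^ k :=
      hk.convexOn_pow.translate_left c
    simp only [sub_eq_add_neg]
    exact (hshift (-a)).add (hshift a)
  · rw [show -σ - a = -(σ + a) by ring, show -σ + a = -(σ - a) by ring, hk.neg_pow, hk.neg_pow,
      add_comm]

namespace Polynomial

theorem integrable_eval {μ : Measure ℝ} (hmom : ∀ n : ℕ, Integrable (fun t => |t| ^ n) μ)
    (p : ℝ[X]) : Integrable (fun t => p.eval t) μ := by
  induction p using Polynomial.induction_on' with
  | add p q hp hq => simp only [eval_add]; exact hp.add hq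
  | monomial n c =>
    have hpow : Integrable (fun t : ℝ => t ^ n) μ :=
      (integrable_norm_iff (continuous_pow n).aestronglyMeasurable).mp
        (by simpa only [Real.norm_eq_abs, abs_pow] using hmom n)
    simpa only [eval_monomial] using hpow.const_mul c

end Polynomial

namespace MeasureTheory.Measure

variable (μ : Measure ℝ) [μ.IsNegInvariant]

theorem measure_Icc_neg_le_two_mul (c : ℝ) : μ (Icc (-c) c) ≤ 2 * μ (Icc 0 c) := by
  calc μ (Icc (-c) c) ≤ μ (Icc (-c) 0 ∪ Icc 0 c) := measure_mono Icc_subset_Icc_union_Icc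
    _ ≤ μ (Icc (-c) 0) + μ (Icc 0 c) := measure_union_le _ _
    _ = 2 * μ (Icc 0 c) := by
      rw [← μ.measure_neg (Icc 0 c), neg_Icc, neg_zero, two_mul]

theorem measure_setOf_le_abs {c : ℝ} (hc : 0 < c) : μ {x | c ≤ |x|} = 2 * μ (Ici c) := by
  have hsplit : {x : ℝ | c ≤ |x|} = Iic (-c) ∪ Ici c := by
    ext x; simp only [mem_ofPred_eq, mem_union, mem_Iic, mem_Ici, le_abs']
  rw [hsplit, measure_union (Iic_disjoint_Ici.mpr (by linarith)) measurableSet_Ici,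
    ← μ.measure_neg (Ici c), neg_Ici, two_mul]

end MeasureTheory.Measure

def oneSiteIntegrand (a : ℝ) (m n : ℕ) (σ : ℝ) : ℝ :=
  (σ + a) ^ m * (σ - a) ^ n + (σ - a) ^ m * (σ + a) ^ n

namespace oneSiteIntegrand

variable {a : ℝ} {m n : ℕ}

theorem comm (σ : ℝ) : oneSiteIntegrand a m n σ = oneSiteIntegrand a n m σ := by
  unfold oneSiteIntegrand; ring

theorem neg_of_odd (hmn : Odd (m + n)) (σ : ℝ) :
    oneSiteIntegrand a m n (-σ) = -oneSiteIntegrand a m n σ := by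
  have hsign : (-1 : ℝ) ^ m * (-1) ^ n = -1 := by rw [← pow_add, hmn.neg_one_pow]
  simp only [oneSiteIntegrand, show -σ + a = -(σ - a) by ring, show -σ - a = -(σ + a) by ring,
    neg_pow (σ - a), neg_pow (σ + a)]
  linear_combination ((σ - a) ^ m * (σ + a) ^ n + (σ + a) ^ m * (σ - a) ^ n) * hsign

theorem add_right (k : ℕ) (σ : ℝ) :
    oneSiteIntegrand a m (m + k) σ = (σ ^ 2 - a ^ 2) ^ m * ((σ - a) ^ k + (σ + a) ^ k) := by
  rw [oneSiteIntegrand, sq_sub_sq, mul_pow, pow_add, pow_add]; ring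

theorem integrable {χ : Measure ℝ} (hmom : ∀ n : ℕ, Integrable (fun t => |t| ^ n) χ) :
    Integrable (oneSiteIntegrand a m n) χ := by
  unfold oneSiteIntegrand
  simpa using Polynomial.integrable_eval hmom
    ((.X + .C a) ^ m * (.X - .C a) ^ n + (.X - .C a) ^ m * (.X + .C a) ^ n)

end oneSiteIntegrand

theorem integral_sq_sub_sq_pow_mul_nonneg {χ : Measure ℝ} [IsFiniteMeasure χ] [χ.IsNegInvariant]
    {a : ℝ} (ha : 0 < a) (hWells : χ (Icc 0 a) ≤ χ (Ici (a * √2))) (m : ℕ) {k : ℕ} (hk : Even k)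
    (hint : Integrable (fun σ => (σ ^ 2 - a ^ 2) ^ m * ((σ - a) ^ k + (σ + a) ^ k)) χ) :
    0 ≤ ∫ σ, (σ ^ 2 - a ^ 2) ^ m * ((σ - a) ^ k + (σ + a) ^ k) ∂χ := by
  set g : ℝ → ℝ := fun σ => (σ - a) ^ k + (σ + a) ^ k
  have hg_nonneg (σ : ℝ) : 0 ≤ g σ := add_nonneg (hk.pow_nonneg _) (hk.pow_nonneg _)
  have hg_mono {σ τ : ℝ} (h : |σ| ≤ |τ|) : g σ ≤ g τ := hk.pow_sub_add_pow_add_le_of_abs_le a h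
  have hc : 0 < a * √2 := by positivity
  refine integral_nonneg_of_measure_le_of_bounds (A := Icc (-a) a) (B := {x | a * √2 ≤ |x|})
    (C := (a ^ 2) ^ m * g a) hint measurableSet_Icc
    (measurableSet_le measurable_const continuous_abs.measurable) ?_
    (mul_nonneg (by positivity) (hg_nonneg a)) ?_ ?_ ?_
  · calc χ (Icc (-a) a) ≤ 2 * χ (Icc 0 a) := χ.measure_Icc_neg_le_two_mul a
      _ ≤ 2 * χ (Ici (a * √2)) := by gcongr
      _ = χ {x | a * √2 ≤ |x|} := (χ.measure_setOf_le_abs hc).symm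
  · intro σ hσ
    have hσa : |σ| ≤ |a| := by rwa [abs_of_pos ha, abs_le]
    have hP : |σ ^ 2 - a ^ 2| ≤ a ^ 2 := by
      rw [abs_le]; constructor <;> nlinarith [abs_le.mpr hσ, sq_abs σ, abs_nonneg σ]
    calc -((a ^ 2) ^ m * g a) ≤ -(|σ ^ 2 - a ^ 2| ^ m * g σ) :=
          neg_le_neg (mul_le_mul (pow_le_pow_left₀ (abs_nonneg _) hP m) (hg_mono hσa)
            (hg_nonneg σ) (by positivity))
      _ = -|(σ ^ 2 - a ^ 2) ^ m * g σ| := by rw [abs_mul, abs_pow, abs_of_nonneg (hg_nonneg σ)]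
      _ ≤ _ := neg_abs_le _
  · intro σ hσ
    have hσa : |a| ≤ |σ| := by
      rw [abs_of_pos ha]
      exact le_trans (le_mul_of_one_le_right ha.le Real.one_lt_sqrt_two.le) hσ
    have hP : a ^ 2 ≤ σ ^ 2 - a ^ 2 := by
      have h2 := pow_le_pow_left₀ hc.le (show a * √2 ≤ |σ| from hσ) 2
      rw [mul_pow, Real.sq_sqrt zero_le_two, sq_abs] at h2
      linarith
    exact mul_le_mul (pow_le_pow_left₀ (sq_nonneg a) hP m) (hg_mono hσa) (hg_nonneg a)
      (pow_nonneg ((sq_nonneg a).trans hP) m)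
  · intro σ hσ
    have hσa : a < |σ| := by rwa [mem_Icc, ← abs_le, not_le] at hσ
    have hP : 0 ≤ σ ^ 2 - a ^ 2 := by nlinarith [sq_abs σ]
    exact mul_nonneg (pow_nonneg hP m) (hg_nonneg σ)

/-- One-site positivity for all powers. -/
theorem one_site_positivity
    (χ : Measure ℝ) [IsFiniteMeasure χ]
    (hχsym : χ.map (fun t => -t) = χ)
    (hmom : ∀ n : ℕ, Integrable (fun t => |t| ^ n) χ)
    (a : ℝ) (ha : 0 < a)
    (hWells : χ (Set.Icc 0 a) ≤ χ (Set.Ici (a * Real.sqrt 2)))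
    (m n : ℕ) :
    0 ≤ ∫ σ, ((σ + a) ^ m * (σ - a) ^ n + (σ - a) ^ m * (σ + a) ^ n) ∂χ := by
  have : χ.IsNegInvariant := ⟨hχsym⟩
  change 0 ≤ ∫ σ, oneSiteIntegrand a m n σ ∂χ
  rcases Nat.even_or_odd (m + n) with hmn | hmn
  · wlog hle : m ≤ n generalizing m n
    · simpa only [oneSiteIntegrand.comm (m := n)] using
        this n m (by rwa [add_comm]) (le_of_not_ge hle)
    obtain ⟨k, rfl⟩ := Nat.exists_eq_add_of_le hle
    have hk : Even k := by simpa [← add_assoc, Nat.even_add] using hmn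
    have hint : Integrable (fun σ => oneSiteIntegrand a m (m + k) σ) χ :=
      oneSiteIntegrand.integrable hmom
    simp only [oneSiteIntegrand.add_right] at hint ⊢
    exact integral_sq_sub_sq_pow_mul_nonneg ha hWells m hk hint
  · exact (integral_eq_zero_of_odd χ (oneSiteIntegrand.neg_of_odd hmn)).ge
end

section
/- One-site positivity in the odd–odd case. Let χ be a finite symmetric Borel measure on ℝ all of whose absolute moments are finite (∫ |t|^n χ(dt) < ∞ for every n ∈ ℕ), and let a > 0 satisfy the Wells condition χ([a√2, ∞)) ≥ χ([0, a]). Then for all integers k ≥ l ≥ 0, ∫_ℝ [ (σ + a)^{2k+1} (σ − a)^{2l+1} + (σ − a)^{2k+1} (σ + a)^{2l+1} ] χ(dσ) ≥ 0. -/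
/-!
Write `k = l + m`. The integrand factors as `(σ² - a²)^(2l+1) · H(σ)` with
`H(σ) = (σ + a)^(2m) + (σ - a)^(2m)`, an even function that on `[-a, a]` is at most `H(a)` and
for `|σ| ≥ a` is at least `H(a)`. Hence, with `C = a^(2(2l+1)) H(a)`, the integrand is `≥ -C` on
`[-a, a]`, `≥ 0` outside it, and `≥ C` where `|σ| ≥ a√2` (there `σ² - a² ≥ a²`). By symmetry and
the Wells condition, `χ([-a, a]) ≤ 2 χ([0, a]) ≤ 2 χ([a√2, ∞)) = χ(|σ| ≥ a√2)`, so the positive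
contribution outweighs the negative one.
-/

open MeasureTheory Set

theorem integrable_polynomial_eval {μ : Measure ℝ}
    (hmom : ∀ n : ℕ, Integrable (fun t => |t| ^ n) μ) (p : Polynomial ℝ) :
    Integrable (fun t => p.eval t) μ := by
  simp_rw [Polynomial.eval_eq_sum_range]
  refine integrable_finsetSum _ fun i _ => Integrable.const_mul ?_ _
  exact (hmom i).mono' (continuous_pow i).aestronglyMeasurable
    (ae_of_all _ fun t => by simp)

theorem integral_nonneg_of_bounds_of_measure_le {α : Type*} [MeasurableSpace α] {μ : Measure α}
    [IsFiniteMeasure μ] {f : α → ℝ} (hf : Integrable f μ) {S T : Set α}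
    (hS : MeasurableSet S) (hT : MeasurableSet T) (hST : μ S ≤ μ T) {C : ℝ} (hC : 0 ≤ C)
    (hfT : ∀ x ∈ T, C ≤ f x) (hfS : ∀ x ∈ S, -C ≤ f x) (hf0 : ∀ x ∉ S, 0 ≤ f x) :
    0 ≤ ∫ x, f x ∂μ := by
  have hle : ∀ x, T.indicator (fun _ => C) x - S.indicator (fun _ => C) x ≤ f x := by
    intro x
    by_cases hxT : x ∈ T <;> by_cases hxS : x ∈ S <;> simp only [hxT, hxS, indicator_of_mem,
      not_false_eq_true, indicator_of_notMem]
    · linarith [hfT x hxT]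
    · linarith [hfT x hxT]
    · linarith [hfS x hxS]
    · linarith [hf0 x hxS]
  calc (0 : ℝ) ≤ μ.real T * C - μ.real S * C := by
        have : μ.real S ≤ μ.real T := ENNReal.toReal_mono (measure_ne_top μ T) hST
        nlinarith
    _ = ∫ x, T.indicator (fun _ => C) x - S.indicator (fun _ => C) x ∂μ := by
        rw [integral_sub ((integrable_const C).indicator hT) ((integrable_const C).indicator hS),
          integral_indicator_const _ hT, integral_indicator_const _ hS, smul_eq_mul, smul_eq_mul]
    _ ≤ ∫ x, f x ∂μ := integral_mono
        (((integrable_const C).indicator hT).sub ((integrable_const C).indicator hS)) hf hle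

theorem measure_Icc_neg_le_measure_le_abs {μ : Measure ℝ} [μ.IsNegInvariant] {a b : ℝ}
    (hb : 0 < b) (h : μ (Icc 0 a) ≤ μ (Ici b)) : μ (Icc (-a) a) ≤ μ {x | b ≤ |x|} := by
  have hIcc : Icc (-a) a ⊆ -Icc 0 a ∪ Icc 0 a := by
    intro x ⟨h1, h2⟩
    rw [neg_Icc, neg_zero]
    rcases le_total x 0 with hx | hx
    exacts [Or.inl ⟨h1, hx⟩, Or.inr ⟨hx, h2⟩]
  have habs : {x | b ≤ |x|} = -Ici b ∪ Ici b := by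
    ext x
    simp [neg_Ici, le_abs', or_comm]
  have hdisj : Disjoint (-Ici b) (Ici b) := by
    rw [neg_Ici, Iic_disjoint_Ici]
    linarith
  calc μ (Icc (-a) a) ≤ μ (-Icc 0 a) + μ (Icc 0 a) :=
        (measure_mono hIcc).trans (measure_union_le _ _)
    _ = μ (Icc 0 a) + μ (Icc 0 a) := by rw [Measure.measure_neg]
    _ ≤ μ (Ici b) + μ (Ici b) := add_le_add h h
    _ = μ {x | b ≤ |x|} := by rw [habs, measure_union hdisj measurableSet_Ici, Measure.measure_neg]

section
variable {a x : ℝ} {n p : ℕ}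

theorem add_pow_add_sub_pow_le_of_abs_le (hn : Even n) (h : |x| ≤ a) :
    (x + a) ^ n + (x - a) ^ n ≤ (a + a) ^ n + (a - a) ^ n := by
  obtain ⟨h₁, h₂⟩ := abs_le.mp h
  rcases eq_or_ne n 0 with rfl | hn₀
  · simp
  calc (x + a) ^ n + (x - a) ^ n = (x + a) ^ n + (a - x) ^ n := by
        rw [← hn.neg_pow (a - x), neg_sub]
    _ ≤ (x + a + (a - x)) ^ n := pow_add_pow_le (by linarith) (by linarith) hn₀
    _ = (a + a) ^ n := by ring_nf
    _ ≤ (a + a) ^ n + (a - a) ^ n := by simp [hn₀]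

theorem le_add_pow_add_sub_pow_of_le_abs (hn : Even n) (ha : 0 ≤ a) (h : a ≤ |x|) :
    (a + a) ^ n + (a - a) ^ n ≤ (x + a) ^ n + (x - a) ^ n := by
  wlog hx : 0 ≤ x generalizing x
  · have key := this (x := -x) (by rwa [abs_neg]) (by linarith)
    rwa [show -x + a = -(x - a) by ring, show -x - a = -(x + a) by ring, hn.neg_pow,
      hn.neg_pow, add_comm ((x - a) ^ n)] at key
  rw [abs_of_nonneg hx] at h
  exact add_le_add (pow_le_pow_left₀ (by linarith) (by linarith) n)
    (pow_le_pow_left₀ (by simp) (by linarith) n)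

theorem neg_le_sq_sub_sq_pow_mul_of_abs_le (hp : Odd p) (hn : Even n) (h : |x| ≤ a) :
    -((a ^ 2) ^ p * ((a + a) ^ n + (a - a) ^ n)) ≤
      (x ^ 2 - a ^ 2) ^ p * ((x + a) ^ n + (x - a) ^ n) := by
  have hH₀ : 0 ≤ (x + a) ^ n + (x - a) ^ n := add_nonneg (hn.pow_nonneg _) (hn.pow_nonneg _)
  have hQ : -(a ^ 2) ^ p ≤ (x ^ 2 - a ^ 2) ^ p := by
    rw [← hp.neg_pow]
    exact hp.strictMono_pow.monotone (by nlinarith [sq_nonneg x])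
  calc -((a ^ 2) ^ p * ((a + a) ^ n + (a - a) ^ n))
      ≤ -((a ^ 2) ^ p * ((x + a) ^ n + (x - a) ^ n)) :=
        neg_le_neg (mul_le_mul_of_nonneg_left (add_pow_add_sub_pow_le_of_abs_le hn h)
          (by positivity))
    _ = -(a ^ 2) ^ p * ((x + a) ^ n + (x - a) ^ n) := by ring
    _ ≤ (x ^ 2 - a ^ 2) ^ p * ((x + a) ^ n + (x - a) ^ n) := mul_le_mul_of_nonneg_right hQ hH₀

theorem le_sq_sub_sq_pow_mul_of_two_mul_sq_le (hn : Even n) (ha : 0 ≤ a)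
    (h : 2 * a ^ 2 ≤ x ^ 2) :
    (a ^ 2) ^ p * ((a + a) ^ n + (a - a) ^ n) ≤
      (x ^ 2 - a ^ 2) ^ p * ((x + a) ^ n + (x - a) ^ n) := by
  have hax : a ≤ |x| := (le_abs_self a).trans (sq_le_sq.mp (by linarith [sq_nonneg a]))
  exact mul_le_mul (pow_le_pow_left₀ (by positivity) (by linarith) p)
    (le_add_pow_add_sub_pow_of_le_abs hn ha hax)
    (add_nonneg (hn.pow_nonneg _) (hn.pow_nonneg _)) (pow_nonneg (by linarith [sq_nonneg a]) p)

theorem sq_sub_sq_pow_mul_nonneg_of_le_abs (hn : Even n) (ha : 0 ≤ a) (h : a ≤ |x|) :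
    0 ≤ (x ^ 2 - a ^ 2) ^ p * ((x + a) ^ n + (x - a) ^ n) := by
  have hax : a ^ 2 ≤ x ^ 2 := sq_le_sq.mpr (by rwa [abs_of_nonneg ha])
  exact mul_nonneg (pow_nonneg (by linarith) p) (add_nonneg (hn.pow_nonneg _) (hn.pow_nonneg _))

end

/-- One-site positivity in the odd–odd case. -/
theorem one_site_positivity_odd_odd
    (χ : Measure ℝ) [IsFiniteMeasure χ]
    (hχsym : χ.map (fun t => -t) = χ)
    (hmom : ∀ n : ℕ, Integrable (fun t => |t| ^ n) χ)
    (a : ℝ) (ha : 0 < a)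
    (hWells : χ (Set.Icc 0 a) ≤ χ (Set.Ici (a * Real.sqrt 2)))
    (k l : ℕ) (hkl : l ≤ k) :
    0 ≤ ∫ σ, ((σ + a) ^ (2 * k + 1) * (σ - a) ^ (2 * l + 1)
        + (σ - a) ^ (2 * k + 1) * (σ + a) ^ (2 * l + 1)) ∂χ := by
  have : χ.IsNegInvariant := ⟨hχsym⟩
  have hint := integrable_polynomial_eval hmom (open Polynomial in
    (X + C a) ^ (2 * k + 1) * (X - C a) ^ (2 * l + 1)
      + (X - C a) ^ (2 * k + 1) * (X + C a) ^ (2 * l + 1))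
  simp only [Polynomial.eval_add, Polynomial.eval_mul, Polynomial.eval_pow, Polynomial.eval_sub,
    Polynomial.eval_X, Polynomial.eval_C] at hint
  obtain ⟨m, rfl⟩ := Nat.exists_eq_add_of_le hkl
  have hfactor : ∀ σ : ℝ, (σ + a) ^ (2 * (l + m) + 1) * (σ - a) ^ (2 * l + 1)
      + (σ - a) ^ (2 * (l + m) + 1) * (σ + a) ^ (2 * l + 1)
      = (σ ^ 2 - a ^ 2) ^ (2 * l + 1) * ((σ + a) ^ (2 * m) + (σ - a) ^ (2 * m)) := fun σ => by
    rw [sq_sub_sq, mul_pow]; ring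
  have hm : Even (2 * m) := even_two_mul m
  have hb : 0 < a * √2 := by positivity
  refine integral_nonneg_of_bounds_of_measure_le hint measurableSet_Icc
    (measurableSet_le measurable_const measurable_abs)
    (measure_Icc_neg_le_measure_le_abs hb hWells)
    (C := (a ^ 2) ^ (2 * l + 1) * ((a + a) ^ (2 * m) + (a - a) ^ (2 * m)))
    (mul_nonneg (by positivity) (add_nonneg (hm.pow_nonneg _) (hm.pow_nonneg _)))
    (fun σ hσ => ?_) (fun σ hσ => ?_) (fun σ hσ => ?_) <;> rw [hfactor]
  · have hσ2 := pow_le_pow_left₀ hb.le hσ 2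
    rw [sq_abs, mul_pow, Real.sq_sqrt zero_le_two, mul_comm] at hσ2
    exact le_sq_sub_sq_pow_mul_of_two_mul_sq_le hm ha.le hσ2
  · exact neg_le_sq_sub_sq_pow_mul_of_abs_le (odd_two_mul_add_one l) hm (abs_le.mpr hσ)
  · exact sq_sub_sq_pow_mul_nonneg_of_le_abs hm ha.le
      (le_of_not_ge fun h => hσ (abs_le.mp h))
end

section
/- Three-piece lower estimate. Let χ be a finite Borel measure on ℝ, let a > 0 and l, p ∈ ℕ, and set φ(σ) := (σ + a)^{2p} + (σ − a)^{2p}. Assume the function σ ↦ (σ² − a²)^{2l+1} φ(σ) is χ-integrable on [0, ∞). Then ∫_{[0,∞)} (σ² − a²)^{2l+1} φ(σ) χ(dσ) ≥ a^{4l+2} · [ φ(a√2) · χ([a√2, ∞)) − φ(a) · χ([0, a]) ]. -/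
/-!
On `[0, a]` we have `|σ² - a²| ≤ a²` and `φ(σ) ≤ φ(a)`, the latter because
`x ^ n + y ^ n ≤ (x + y) ^ n` for `x = σ + a`, `y = a - σ ≥ 0`. Beyond `a` the integrand is
nonnegative, and on `[a√2, ∞)` we have `σ² - a² ≥ a²` while `φ` is increasing there. Integrating
these constant bounds over `[0, a]` and `[a√2, ∞)` and dropping `(a, a√2)` gives the estimate.
-/

open MeasureTheory

/-- The auxiliary function φ. -/
noncomputable def phi (a : ℝ) (p : ℕ) (σ : ℝ) : ℝ :=
  (σ + a) ^ (2 * p) + (σ - a) ^ (2 * p)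

open Set

theorem le_setIntegral_Ici_of_bounds {α : Type*} [LinearOrder α] [TopologicalSpace α]
    [OrderClosedTopology α] [MeasurableSpace α] [OpensMeasurableSpace α]
    {μ : Measure α} [IsFiniteMeasure μ] {f : α → ℝ} {b c d : α} {m M : ℝ}
    (hbc : b ≤ c) (hcd : c < d) (hf : IntegrableOn f (Ici b) μ)
    (hlow : ∀ x ∈ Icc b c, m ≤ f x) (hnonneg : ∀ x ∈ Ioi c, 0 ≤ f x)
    (hhigh : ∀ x ∈ Ici d, M ≤ f x) :
    m * μ.real (Icc b c) + M * μ.real (Ici d) ≤ ∫ x in Ici b, f x ∂μ := by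
  rw [← Icc_union_Ioi_eq_Ici hbc] at hf ⊢
  have hIoi : IntegrableOn f (Ioi c) μ := hf.mono_set subset_union_right
  have hIci_sub : Ici d ⊆ Ioi c := fun x hx => hcd.trans_le hx
  rw [setIntegral_union ((Iic_disjoint_Ioi le_rfl).mono_left Icc_subset_Iic_self) measurableSet_Ioi
    (hf.mono_set subset_union_left) hIoi]
  gcongr
  · exact setIntegral_ge_of_const_le_real measurableSet_Icc (measure_ne_top μ _) hlow
      (hf.mono_set subset_union_left)
  · calc M * μ.real (Ici d) ≤ ∫ x in Ici d, f x ∂μ :=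
          setIntegral_ge_of_const_le_real measurableSet_Ici (measure_ne_top μ _) hhigh
            (hIoi.mono_set hIci_sub)
      _ ≤ ∫ x in Ioi c, f x ∂μ :=
          setIntegral_mono_set hIoi ((ae_restrict_iff' measurableSet_Ioi).2
            (Filter.Eventually.of_forall hnonneg)) (Filter.Eventually.of_forall hIci_sub)

lemma phi_nonneg (a : ℝ) (p : ℕ) (σ : ℝ) : 0 ≤ phi a p σ :=
  add_nonneg ((even_two_mul p).pow_nonneg _) ((even_two_mul p).pow_nonneg _)

lemma phi_le_phi_self {a σ : ℝ} (p : ℕ) (hσ : σ ∈ Icc 0 a) : phi a p σ ≤ phi a p a := by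
  rcases eq_or_ne p 0 with rfl | hp
  · simp [phi]
  have h2p : 2 * p ≠ 0 := by omega
  calc phi a p σ = (σ + a) ^ (2 * p) + (a - σ) ^ (2 * p) := by
        rw [phi, ← (even_two_mul p).neg_pow (σ - a), neg_sub]
    _ ≤ ((σ + a) + (a - σ)) ^ (2 * p) :=
        pow_add_pow_le (by linarith [hσ.1, hσ.2]) (by linarith [hσ.2]) h2p
    _ = phi a p a := by rw [phi, sub_self, zero_pow h2p, add_zero]; ring

lemma phi_monotoneOn {a : ℝ} (ha : 0 ≤ a) (p : ℕ) : MonotoneOn (phi a p) (Ici a) := by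
  intro s (hs : a ≤ s) t _ hst
  unfold phi
  gcongr
  linarith

section Integrand

variable {a σ : ℝ} (l p : ℕ)

lemma neg_le_integrand_of_mem_Icc (hσ : σ ∈ Icc 0 a) :
    -(a ^ (4 * l + 2) * phi a p a) ≤ (σ ^ 2 - a ^ 2) ^ (2 * l + 1) * phi a p σ := by
  refine (abs_le.1 ?_).1
  have hkernel : |σ ^ 2 - a ^ 2| ≤ a ^ 2 := by
    rw [abs_le]; constructor <;> nlinarith [hσ.1, hσ.2]
  rw [abs_mul, abs_pow, abs_of_nonneg (phi_nonneg a p σ), show 4 * l + 2 = 2 * (2 * l + 1) by ring,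
    pow_mul]
  exact mul_le_mul (pow_le_pow_left₀ (abs_nonneg _) hkernel _) (phi_le_phi_self p hσ)
    (phi_nonneg a p σ) (by positivity)

lemma integrand_nonneg_of_lt (ha : 0 ≤ a) (hσ : a < σ) :
    0 ≤ (σ ^ 2 - a ^ 2) ^ (2 * l + 1) * phi a p σ :=
  mul_nonneg (pow_nonneg (by nlinarith) _) (phi_nonneg a p σ)

lemma le_integrand_of_sqrt_two_mul_le (ha : 0 ≤ a) (hσ : a * √2 ≤ σ) :
    a ^ (4 * l + 2) * phi a p (a * √2) ≤ (σ ^ 2 - a ^ 2) ^ (2 * l + 1) * phi a p σ := by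
  have ha_le : a ≤ a * √2 := le_mul_of_one_le_right ha Real.one_lt_sqrt_two.le
  have hkernel : a ^ 2 ≤ σ ^ 2 - a ^ 2 := by
    have : (a * √2) ^ 2 = 2 * a ^ 2 := by rw [mul_pow, Real.sq_sqrt zero_le_two]; ring
    nlinarith
  rw [show 4 * l + 2 = 2 * (2 * l + 1) by ring, pow_mul]
  exact mul_le_mul (pow_le_pow_left₀ (by positivity) hkernel _)
    (phi_monotoneOn ha p ha_le (ha_le.trans hσ) hσ) (phi_nonneg a p _)
    (pow_nonneg ((sq_nonneg a).trans hkernel) _)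

end Integrand

/-- Three-piece lower estimate. -/
theorem three_piece_estimate
    (χ : Measure ℝ) [IsFiniteMeasure χ]
    (a : ℝ) (ha : 0 < a) (l p : ℕ)
    (hint : IntegrableOn
      (fun σ => (σ ^ 2 - a ^ 2) ^ (2 * l + 1) * phi a p σ) (Set.Ici 0) χ) :
    a ^ (4 * l + 2) *
        (phi a p (a * Real.sqrt 2) * (χ (Set.Ici (a * Real.sqrt 2))).toReal
          - phi a p a * (χ (Set.Icc 0 a)).toReal)
      ≤ ∫ σ in Set.Ici (0 : ℝ), (σ ^ 2 - a ^ 2) ^ (2 * l + 1) * phi a p σ ∂χ := by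
  have hsplit : a < a * √2 := lt_mul_of_one_lt_right ha Real.one_lt_sqrt_two
  have hbound := le_setIntegral_Ici_of_bounds ha.le hsplit hint
    (fun _ => neg_le_integrand_of_mem_Icc l p) (fun _ => integrand_nonneg_of_lt l p ha.le)
    (fun _ => le_integrand_of_sqrt_two_mul_le l p ha.le)
  simp only [measureReal_def] at hbound
  linarith
end
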